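/- Let Ω ⊂ ℝ^n be a bounded open set, 1 < p < ∞, and let f ∈ I_{m,p}(Ω,c_0,c_1,a_0,a_1). Then there exists a constant c > 0, depending only on p, c_1 and ‖a_0+a_1‖_{L^1(Ω)}, such that for all Φ, Ψ ∈ L^p(Ω)^m one has ∫_Ω |f(x,Φ(x)) − f(x,Ψ(x))| dx ≤ c‖Φ−Ψ‖_{L^p(Ω)^m}(‖Φ‖_{L^p(Ω)^m} + ‖Ψ‖_{L^p(Ω)^m} + 1)^{p−1}. -/

import Mathlib

open MeasureTheory Filter Topology
open scoped ENNReal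

noncomputable section

abbrev Pt (n : ℕ) := EuclideanSpace ℝ (Fin n)
abbrev Vec (m : ℕ) := EuclideanSpace ℝ (Fin m)

variable {n m : ℕ}

def LocLipCoeff (c : Fin m → Fin n → Pt n → ℝ) : Prop :=
  ∀ j i, LocallyLipschitz (c j i)

def XT (c : Fin m → Fin n → Pt n → ℝ) (j : Fin m) (ψ : Pt n → ℝ) (x : Pt n) : ℝ :=
  -∑ i, fderiv ℝ (fun y => c j i y * ψ y) x (EuclideanSpace.single i 1)

def IsTest (Ω : Set (Pt n)) (ψ : Pt n → ℝ) : Prop :=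
  ContDiff ℝ (⊤ : ℕ∞) ψ ∧ HasCompactSupport ψ ∧ tsupport ψ ⊆ Ω

def IsXGrad (c : Fin m → Fin n → Pt n → ℝ) (Ω : Set (Pt n))
    (u : Pt n → ℝ) (U : Pt n → Vec m) : Prop :=
  ∀ ψ, IsTest Ω ψ → ∀ j,
    ∫ x in Ω, u x * XT c j ψ x = ∫ x in Ω, U x j * ψ x

def XGradC1 (c : Fin m → Fin n → Pt n → ℝ) (φ : Pt n → ℝ) (x : Pt n) : Vec m :=
  WithLp.toLp 2 (fun j => ∑ i, c j i x * fderiv ℝ φ x (EuclideanSpace.single i 1))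

def MemW1pX (c : Fin m → Fin n → Pt n → ℝ) (Ω : Set (Pt n)) (p : ℝ)
    (u : Pt n → ℝ) (U : Pt n → Vec m) : Prop :=
  MemLp u (ENNReal.ofReal p) (volume.restrict Ω) ∧
  MemLp U (ENNReal.ofReal p) (volume.restrict Ω) ∧
  IsXGrad c Ω u U

def TendstoLp {E : Type*} [NormedAddCommGroup E] (p : ℝ) (μ : Measure (Pt n))
    (uh : ℕ → Pt n → E) (u : Pt n → E) : Prop :=
  Tendsto (fun h => eLpNorm (fun x => uh h x - u x) (ENNReal.ofReal p) μ) atTop (nhds 0)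

def MemW1pX0 (c : Fin m → Fin n → Pt n → ℝ) (Ω : Set (Pt n)) (p : ℝ)
    (u : Pt n → ℝ) (U : Pt n → Vec m) : Prop :=
  MemW1pX c Ω p u U ∧
  ∃ φ : ℕ → Pt n → ℝ,
    (∀ k, ContDiff ℝ 1 (φ k) ∧ HasCompactSupport (φ k) ∧ tsupport (φ k) ⊆ Ω) ∧
    TendstoLp p (volume.restrict Ω) φ u ∧
    TendstoLp p (volume.restrict Ω) (fun k => XGradC1 c (φ k)) U

def MemI (Ω : Set (Pt n)) (p c0 c1 : ℝ) (a0 a1 : Pt n → ℝ)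
    (f : Pt n → Vec m → ℝ) : Prop :=
  Measurable (Function.uncurry f) ∧
  (∀ᵐ x ∂(volume.restrict Ω), ConvexOn ℝ Set.univ (f x)) ∧
  (∀ᵐ x ∂(volume.restrict Ω), ∀ η : Vec m,
    c0 * ‖η‖ ^ p - a0 x ≤ f x η ∧ f x η ≤ c1 * ‖η‖ ^ p + a1 x)

def LIC (c : Fin m → Fin n → Pt n → ℝ) (Ω : Set (Pt n)) : Prop :=
  ∃ N : Set (Pt n), N ⊆ Ω ∧ (∃ C : Set (Pt n), IsClosed C ∧ N = Ω ∩ C) ∧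
    volume N = 0 ∧
    ∀ x ∈ Ω \ N, LinearIndependent ℝ (fun j : Fin m => fun i : Fin n => c j i x)

def PoincareIneq (c : Fin m → Fin n → Pt n → ℝ) (Ω : Set (Pt n)) (p cp : ℝ) : Prop :=
  ∀ u U, MemW1pX0 c Ω p u U →
    cp * ∫ x in Ω, |u x| ^ p ≤ ∫ x in Ω, ‖U x‖ ^ p

def CompactEmbW0 (c : Fin m → Fin n → Pt n → ℝ) (Ω : Set (Pt n)) (p : ℝ) : Prop :=
  ∀ (u : ℕ → Pt n → ℝ) (U : ℕ → Pt n → Vec m) (M : ℝ),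
    (∀ h, MemW1pX0 c Ω p (u h) (U h)) →
    (∀ h, (∫ x in Ω, |u h x| ^ p) + (∫ x in Ω, ‖U h x‖ ^ p) ≤ M) →
    ∃ (φ : ℕ → ℕ) (v : Pt n → ℝ), StrictMono φ ∧
      MemLp v (ENNReal.ofReal p) (volume.restrict Ω) ∧
      TendstoLp p (volume.restrict Ω) (fun k => u (φ k)) v

def XInt (c : Fin m → Fin n → Pt n → ℝ) (A : Set (Pt n)) (p : ℝ)
    (f : Pt n → Vec m → ℝ) (u : Pt n → ℝ) : EReal :=
  sInf {y : EReal | ∃ U, MemW1pX c A p u U ∧ y = ((∫ x in A, f x (U x) : ℝ) : EReal)}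

def XIntShift (c : Fin m → Fin n → Pt n → ℝ) (A : Set (Pt n)) (p : ℝ)
    (f : Pt n → Vec m → ℝ) (Φ : Pt n → Vec m) (u : Pt n → ℝ) : EReal :=
  sInf {y : EReal | ∃ U, MemW1pX c A p u U ∧
    y = ((∫ x in A, f x (U x + Φ x) : ℝ) : EReal)}

def indWphi (c : Fin m → Fin n → Pt n → ℝ) (Ω : Set (Pt n)) (p : ℝ)
    (φ : Pt n → ℝ) (u : Pt n → ℝ) : EReal :=
  letI := Classical.propDecidable
  if ∃ W, MemW1pX0 c Ω p (fun x => u x - φ x) W then (0 : EReal) else ⊤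

def GammaConvLp (Ω : Set (Pt n)) (p : ℝ)
    (Fh : ℕ → (Pt n → ℝ) → EReal) (F : (Pt n → ℝ) → EReal) : Prop :=
  ∀ u : Pt n → ℝ, MemLp u (ENNReal.ofReal p) (volume.restrict Ω) →
    (∀ uh : ℕ → Pt n → ℝ,
        (∀ h, MemLp (uh h) (ENNReal.ofReal p) (volume.restrict Ω)) →
        TendstoLp p (volume.restrict Ω) uh u →
        F u ≤ liminf (fun h => Fh h (uh h)) atTop) ∧
    (∃ uh : ℕ → Pt n → ℝ,
        (∀ h, MemLp (uh h) (ENNReal.ofReal p) (volume.restrict Ω)) ∧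
        TendstoLp p (volume.restrict Ω) uh u ∧
        limsup (fun h => Fh h (uh h)) atTop ≤ F u)

def WeakLpR (Ω : Set (Pt n)) (q : ℝ) (uh : ℕ → Pt n → ℝ) (u : Pt n → ℝ) : Prop :=
  ∀ ψ : Pt n → ℝ, MemLp ψ (ENNReal.ofReal q) (volume.restrict Ω) →
    Tendsto (fun h => ∫ x in Ω, ψ x * uh h x) atTop (nhds (∫ x in Ω, ψ x * u x))

def WeakLpV (Ω : Set (Pt n)) (q : ℝ) (Φh : ℕ → Pt n → Vec m) (Φ : Pt n → Vec m) : Prop :=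
  ∀ Ψ : Pt n → Vec m, MemLp Ψ (ENNReal.ofReal q) (volume.restrict Ω) →
    Tendsto (fun h => ∫ x in Ω, (inner ℝ (Ψ x) (Φh h x) : ℝ)) atTop
      (nhds (∫ x in Ω, (inner ℝ (Ψ x) (Φ x) : ℝ)))

def Caratheodory (Ω : Set (Pt n)) (g : Pt n → ℝ → ℝ) : Prop :=
  (∀ s : ℝ, Measurable fun x => g x s) ∧
  (∀ᵐ x ∂(volume.restrict Ω), Continuous (g x))

def GrowthG (Ω : Set (Pt n)) (p d0 d1 : ℝ) (b0 b1 : Pt n → ℝ) (g : Pt n → ℝ → ℝ) : Prop :=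
  ∀ᵐ x ∂(volume.restrict Ω), ∀ s : ℝ,
    d0 * |s| ^ p - b0 x ≤ g x s ∧ g x s ≤ d1 * |s| ^ p + b1 x

/-- The functional `Ξ^φ = F + G + 𝟙_φ` on `L^p(Ω)`. -/
def Xi (c : Fin m → Fin n → Pt n → ℝ) (Ω : Set (Pt n)) (p : ℝ)
    (f : Pt n → Vec m → ℝ) (g : Pt n → ℝ → ℝ) (φb : Pt n → ℝ)
    (u : Pt n → ℝ) : EReal :=
  XInt c Ω p f u + ((∫ x in Ω, g x (u x) : ℝ) : EReal) + indWphi c Ω p φb u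

/-- `u` minimizes the functional `F` over `L^p(Ω)`. -/
def MinimizesLp (Ω : Set (Pt n)) (p : ℝ) (F : (Pt n → ℝ) → EReal) (u : Pt n → ℝ) : Prop :=
  MemLp u (ENNReal.ofReal p) (volume.restrict Ω) ∧
  ∀ v, MemLp v (ENNReal.ofReal p) (volume.restrict Ω) → F u ≤ F v

/-- The infimum of the functional `F` over `L^p(Ω)`. -/
def infLp (Ω : Set (Pt n)) (p : ℝ) (F : (Pt n → ℝ) → EReal) : EReal :=
  sInf {y : EReal | ∃ u, MemLp u (ENNReal.ofReal p) (volume.restrict Ω) ∧ y = F u}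

/-- The functional `Ψ^φ(u) = ∫_Ω |Xu|^p` if `u ∈ W^{1,p}_{X,φ}(Ω)`, `∞` otherwise. -/
def PsiPhi (c : Fin m → Fin n → Pt n → ℝ) (Ω : Set (Pt n)) (p : ℝ)
    (φ : Pt n → ℝ) (Φ : Pt n → Vec m) (u : Pt n → ℝ) : ℝ≥0∞ :=
  sInf {y : ℝ≥0∞ | ∃ W, MemW1pX0 c Ω p (fun x => u x - φ x) W ∧
    y = ENNReal.ofReal (∫ x in Ω, ‖Φ x + W x‖ ^ p)}

/-- The quadratic form `⟨Aξ, ζ⟩`. -/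
def aQuad (A : Matrix (Fin m) (Fin m) ℝ) (ξ ζ : Vec m) : ℝ :=
  ∑ i, ∑ j, A i j * ξ j * ζ i

/-- `x ↦ A(x) U(x)` as a `Vec m`-valued function. -/
def aMulVec (A : Pt n → Matrix (Fin m) (Fin m) ℝ) (U : Pt n → Vec m) : Pt n → Vec m :=
  fun x => WithLp.toLp 2 (fun i => ∑ j, A x i j * U x j)

/-- Weak solution of `μ u + div_X(a(x) X u) = g` with zero boundary values. -/
def IsWeakSol (c : Fin m → Fin n → Pt n → ℝ) (Ω : Set (Pt n))
    (A : Pt n → Matrix (Fin m) (Fin m) ℝ) (μ : ℝ) (g : Pt n → ℝ)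
    (u : Pt n → ℝ) (U : Pt n → Vec m) : Prop :=
  MemW1pX0 c Ω 2 u U ∧
  ∀ v V, MemW1pX0 c Ω 2 v V →
    μ * (∫ x in Ω, u x * v x) + (∫ x in Ω, aQuad (A x) (U x) (V x)) =
      ∫ x in Ω, g x * v x

/-- The Heisenberg group law on `ℝ^{2s+1}`. -/
def Hmul (s : ℕ) (x y : Pt (2*s+1)) : Pt (2*s+1) :=
  WithLp.toLp 2 (fun i =>
    if (i : ℕ) < 2*s then x i + y i
    else x i + y i + (1/2) * ∑ k : Fin s,
      (x ⟨(k : ℕ), by have := k.isLt; omega⟩ * y ⟨s + (k : ℕ), by have := k.isLt; omega⟩ -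
       y ⟨(k : ℕ), by have := k.isLt; omega⟩ * x ⟨s + (k : ℕ), by have := k.isLt; omega⟩))

/-- The intrinsic dilations of the Heisenberg group. -/
def Hdil (s : ℕ) (lam : ℝ) (x : Pt (2*s+1)) : Pt (2*s+1) :=
  WithLp.toLp 2 (fun i => if (i : ℕ) < 2*s then lam * x i else lam^2 * x i)

/-- `H`-periodicity: `g(2k ⬝ x) = g(x)` for all `k ∈ ℤ^n`. -/
def HPeriodic (s : ℕ) (g : Pt (2*s+1) → ℝ) : Prop :=
  ∀ (x : Pt (2*s+1)) (k : Fin (2*s+1) → ℤ),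
    g (Hmul s (WithLp.toLp 2 (fun i => 2 * (k i : ℝ))) x) = g x

/-- The coefficients of the horizontal gradient of the Heisenberg group `ℍ^s`. -/
def Hcoeff (s : ℕ) : Fin (2*s) → Fin (2*s+1) → Pt (2*s+1) → ℝ :=
  fun j i x =>
    if (i : ℕ) = (j : ℕ) then 1
    else if (i : ℕ) = 2*s then
      (if hj : (j : ℕ) < s then -(x ⟨s + (j : ℕ), by omega⟩) / 2
       else x ⟨(j : ℕ) - s, by have := j.isLt; omega⟩ / 2)
    else 0


lemma tri_rpow {p : ℝ} (hp : 0 ≤ p) {u v w : ℝ} (hu : 0 ≤ u) (hv : 0 ≤ v) (hw : 0 ≤ w) :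
    (u + v + w) ^ p ≤ 3 ^ p * (u ^ p + v ^ p + w ^ p) := by
  set M := max (max u v) w with hMdef
  have hM : 0 ≤ M := hw.trans (le_max_right _ _)
  have h1 : u + v + w ≤ 3 * M := by
    have h2 : u ≤ M := ((le_max_left u v).trans (le_max_left _ _))
    have h3 : v ≤ M := ((le_max_right u v).trans (le_max_left _ _))
    have h4 : w ≤ M := le_max_right _ _
    linarith
  have h2 : (u + v + w) ^ p ≤ (3 * M) ^ p :=
    Real.rpow_le_rpow (by positivity) h1 hp
  have h3 : (3 * M : ℝ) ^ p = 3 ^ p * M ^ p := Real.mul_rpow (by norm_num) hM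
  have h4 : M ^ p ≤ u ^ p + v ^ p + w ^ p := by
    have hcase : M = u ∨ M = v ∨ M = w := by
      rcases max_cases (max u v) w with ⟨h, _⟩ | ⟨h, _⟩
      · rcases max_cases u v with ⟨h', _⟩ | ⟨h', _⟩
        · exact Or.inl (h.trans h')
        · exact Or.inr (Or.inl (h.trans h'))
      · exact Or.inr (Or.inr h)
    have pu : (0:ℝ) ≤ u ^ p := by positivity
    have pv : (0:ℝ) ≤ v ^ p := by positivity
    have pw : (0:ℝ) ≤ w ^ p := by positivity
    rcases hcase with h | h | h <;> rw [h] <;> linarith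
  calc (u + v + w) ^ p ≤ 3 ^ p * M ^ p := h3 ▸ h2
    _ ≤ 3 ^ p * (u ^ p + v ^ p + w ^ p) :=
      mul_le_mul_of_nonneg_left h4 (by positivity)

lemma conv_diff_le {m : ℕ} {p c1 a0v a1v : ℝ} (hp : 1 < p) (hc1 : 0 < c1)
    (ha0 : 0 ≤ a0v) (ha1 : 0 ≤ a1v)
    {g : Vec m → ℝ} (hg : ConvexOn ℝ Set.univ g)
    (hlow : ∀ ξ, -a0v ≤ g ξ) (hup : ∀ ξ, g ξ ≤ c1 * ‖ξ‖ ^ p + a1v)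
    (η ζ : Vec m) :
    g η - g ζ ≤ (c1 * 2 ^ p + 1) * (‖η‖ + ‖ζ‖ + (a0v + a1v) ^ (1/p)) ^ (p-1) * ‖η - ζ‖ := by
  set R : ℝ := ‖η‖ + ‖ζ‖ + (a0v + a1v) ^ (1/p) with hRdef
  have hp0 : (0:ℝ) < p := by linarith
  have haR : (0:ℝ) ≤ (a0v + a1v) ^ (1/p) := by positivity
  have hnη := norm_nonneg η
  have hnζ := norm_nonneg ζ
  by_cases hez : η = ζ
  · subst hez; simp only [sub_self]
    positivity
  · have hd : (0:ℝ) < ‖η - ζ‖ := by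
      rw [norm_pos_iff]; exact sub_ne_zero.mpr hez
    set d : ℝ := ‖η - ζ‖ with hddef
    have hdR : d ≤ R := by
      have := norm_sub_le η ζ
      simp only [hRdef]; linarith
    have hR : (0:ℝ) < R := lt_of_lt_of_le hd hdR
    set t : ℝ := d / R with htdef
    have ht0 : 0 < t := div_pos hd hR
    have ht1 : t ≤ 1 := (div_le_one hR).mpr hdR
    set w : Vec m := ζ + (R / d) • (η - ζ) with hwdef
    have h1 : t * (R / d) = 1 := by
      field_simp [htdef]
      rw [htdef, div_mul_cancel₀ _ hR.ne']
    have hcomb : (1 - t) • ζ + t • w = η := by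
      calc (1 - t) • ζ + t • w
          = (1 - t) • ζ + (t • ζ + (t * (R / d)) • (η - ζ)) := by
            rw [hwdef, smul_add, smul_smul]
        _ = ((1 - t) + t) • ζ + (η - ζ) := by
            rw [h1, one_smul, ← add_assoc, ← add_smul]
        _ = η := by simp
    have hconv := hg.2 (Set.mem_univ ζ) (Set.mem_univ w)
      (sub_nonneg.mpr ht1) ht0.le (by ring)
    rw [hcomb, smul_eq_mul, smul_eq_mul] at hconv
    have hkey : g η - g ζ ≤ t * (g w - g ζ) := by nlinarith [hconv]
    have hwnorm : ‖w‖ ≤ 2 * R := by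
      have h2 : ‖w‖ ≤ ‖ζ‖ + ‖(R / d) • (η - ζ)‖ := norm_add_le _ _
      have h3 : ‖(R / d) • (η - ζ)‖ = (R / d) * d := by
        rw [norm_smul, Real.norm_eq_abs, abs_of_nonneg (by positivity)]
      have h4 : (R / d) * d = R := by field_simp
      have h5 : ‖ζ‖ ≤ R := by simp only [hRdef]; linarith
      calc ‖w‖ ≤ ‖ζ‖ + R := by rw [h3, h4] at h2; exact h2
        _ ≤ 2 * R := by linarith
    have haRp : a0v + a1v ≤ R ^ p := by
      have h6 : ((a0v + a1v) ^ (1/p)) ^ p ≤ R ^ p :=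
        Real.rpow_le_rpow haR (by simp only [hRdef]; linarith) hp0.le
      rwa [← Real.rpow_mul (by positivity), one_div, inv_mul_cancel₀ hp0.ne',
        Real.rpow_one] at h6
    have hgw : g w - g ζ ≤ (c1 * 2 ^ p + 1) * R ^ p := by
      have h7 : g w ≤ c1 * ‖w‖ ^ p + a1v := hup w
      have h8 : ‖w‖ ^ p ≤ (2 * R) ^ p :=
        Real.rpow_le_rpow (norm_nonneg w) hwnorm hp0.le
      have h9 : (2 * R) ^ p = 2 ^ p * R ^ p := Real.mul_rpow (by norm_num) hR.le
      have h10 : -a0v ≤ g ζ := hlow ζ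
      have hRp0 : (0:ℝ) ≤ R ^ p := by positivity
      nlinarith [h7, h8, h9, h10, haRp, hc1.le]
    have hRp1 : R ^ p = R ^ (p - 1) * R := by
      rw [← Real.rpow_add_one hR.ne' (p - 1)]; ring_nf
    have hRp1' : (0:ℝ) ≤ R ^ (p - 1) := by positivity
    calc g η - g ζ ≤ t * (g w - g ζ) := hkey
      _ ≤ t * ((c1 * 2 ^ p + 1) * R ^ p) :=
          mul_le_mul_of_nonneg_left hgw ht0.le
      _ = (c1 * 2 ^ p + 1) * R ^ (p - 1) * d := by
          rw [hRp1, htdef]; field_simp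

set_option maxHeartbeats 1000000 in
/-- continuity estimate for the integral functional, with constant
depending only on `p`, `c₁` and the `L¹` norm of `a₀ + a₁`. -/
theorem statement_14 (p c1 A : ℝ) (hp : 1 < p) (hc1 : 0 < c1) (hA : 0 ≤ A) :
    ∃ cst : ℝ, 0 < cst ∧
      ∀ (n m : ℕ) (Ω : Set (Pt n)), IsOpen Ω → Bornology.IsBounded Ω →
      ∀ (c0 : ℝ) (a0 a1 : Pt n → ℝ) (f : Pt n → Vec m → ℝ),
        0 < c0 → c0 ≤ c1 →
        (∀ x, 0 ≤ a0 x) → (∀ x, 0 ≤ a1 x) →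
        IntegrableOn a0 Ω → IntegrableOn a1 Ω →
        (∫ x in Ω, (a0 x + a1 x)) ≤ A →
        MemI Ω p c0 c1 a0 a1 f →
        ∀ (Φ Ψ : Pt n → Vec m),
          MemLp Φ (ENNReal.ofReal p) (volume.restrict Ω) →
          MemLp Ψ (ENNReal.ofReal p) (volume.restrict Ω) →
          (∫ x in Ω, |f x (Φ x) - f x (Ψ x)|) ≤
            cst * (∫ x in Ω, ‖Φ x - Ψ x‖ ^ p) ^ (1/p) *
              ((∫ x in Ω, ‖Φ x‖ ^ p) ^ (1/p) + (∫ x in Ω, ‖Ψ x‖ ^ p) ^ (1/p) + 1)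
                ^ (p - 1) := by
  have hp0 : (0:ℝ) < p := by linarith
  have hpq : p.HolderConjugate (p / (p - 1)) := Real.HolderConjugate.conjExponent hp
  set q : ℝ := p / (p - 1) with hqdef
  have hq1 : 1 < q := hpq.symm.lt
  have hq0 : (0:ℝ) < q := by linarith
  refine ⟨(c1 * 2 ^ p + 1) * (3 ^ p * (2 + A)), by positivity, ?_⟩
  intro n m Ω hΩo hΩb c0 a0 a1 f hc0 hc01 ha0 ha1 ha0i ha1i hAle hI Φ Ψ hΦ hΨ
  have hne0 : ENNReal.ofReal p ≠ 0 := (ENNReal.ofReal_pos.mpr hp0).ne'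
  have hnet : ENNReal.ofReal p ≠ ∞ := ENNReal.ofReal_ne_top
  have htR : (ENNReal.ofReal p).toReal = p := ENNReal.toReal_ofReal hp0.le
  set R : Pt n → ℝ := fun x => ‖Φ x‖ + ‖Ψ x‖ + (a0 x + a1 x) ^ (1/p) with hRdef
  have hR0 : ∀ x, 0 ≤ R x := fun x => by
    have := ha0 x; have := ha1 x; positivity
  -- integrable pieces
  have ha' : Integrable (fun x => a0 x + a1 x) (volume.restrict Ω) := ha0i.add ha1i
  have hΦpI : Integrable (fun x => ‖Φ x‖ ^ p) (volume.restrict Ω) := by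
    simpa [htR] using hΦ.integrable_norm_rpow hne0 hnet
  have hΨpI : Integrable (fun x => ‖Ψ x‖ ^ p) (volume.restrict Ω) := by
    simpa [htR] using hΨ.integrable_norm_rpow hne0 hnet
  have hΔ : MemLp (fun x => Φ x - Ψ x) (ENNReal.ofReal p) (volume.restrict Ω) := hΦ.sub hΨ
  have hΔpI : Integrable (fun x => ‖Φ x - Ψ x‖ ^ p) (volume.restrict Ω) := by
    simpa [htR] using hΔ.integrable_norm_rpow hne0 hnet
  -- MemLp facts
  have haL1 : MemLp (fun x => a0 x + a1 x) 1 (volume.restrict Ω) :=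
    memLp_one_iff_integrable.mpr ha'
  have harp : MemLp (fun x => (a0 x + a1 x) ^ (1/p)) (ENNReal.ofReal p) (volume.restrict Ω) := by
    have h := haL1.norm_rpow_div (ENNReal.ofReal (1/p))
    have he : (1:ℝ≥0∞) / ENNReal.ofReal (1/p) = ENNReal.ofReal p := by
      rw [one_div, one_div, ENNReal.ofReal_inv_of_pos hp0, inv_inv]
    have hfun : (fun x => ‖a0 x + a1 x‖ ^ (ENNReal.ofReal (1/p)).toReal)
        = fun x => (a0 x + a1 x) ^ (1/p) := by
      funext x
      rw [ENNReal.toReal_ofReal (by positivity : (0:ℝ) ≤ 1/p),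
        Real.norm_of_nonneg (by have := ha0 x; have := ha1 x; linarith)]
    rw [hfun, he] at h
    exact h
  have hRmem : MemLp R (ENNReal.ofReal p) (volume.restrict Ω) :=
    (hΦ.norm.add hΨ.norm).add harp
  have hRq : MemLp (fun x => R x ^ (p - 1)) (ENNReal.ofReal q) (volume.restrict Ω) := by
    have h := hRmem.norm_rpow_div (ENNReal.ofReal (p - 1))
    have he : ENNReal.ofReal p / ENNReal.ofReal (p - 1) = ENNReal.ofReal q := by
      rw [hqdef, ENNReal.ofReal_div_of_pos (by linarith)]
    have hfun : (fun x => ‖R x‖ ^ (ENNReal.ofReal (p - 1)).toReal)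
        = fun x => R x ^ (p - 1) := by
      funext x
      rw [ENNReal.toReal_ofReal (by linarith : (0:ℝ) ≤ p - 1),
        Real.norm_of_nonneg (hR0 x)]
    rw [hfun, he] at h
    exact h
  have hRpI : Integrable (fun x => R x ^ p) (volume.restrict Ω) := by
    have h := hRmem.integrable_norm_rpow hne0 hnet
    rw [htR] at h
    exact h.congr (Eventually.of_forall fun x => by
      show ‖R x‖ ^ p = R x ^ p
      rw [Real.norm_of_nonneg (hR0 x)])
  -- measurability and integrability of f ∘ Φ
  obtain ⟨hfm, hcv, hbd⟩ := hI
  have hcomp : ∀ (Θ : Pt n → Vec m), MemLp Θ (ENNReal.ofReal p) (volume.restrict Ω) →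
      Integrable (fun x => ‖Θ x‖ ^ p) (volume.restrict Ω) →
      Integrable (fun x => f x (Θ x)) (volume.restrict Ω) := by
    intro Θ hΘ hΘpI
    obtain ⟨Θ', hΘ'sm, hΘ'eq⟩ := hΘ.1
    have hm : Measurable fun x => f x (Θ' x) :=
      hfm.comp (measurable_id.prodMk hΘ'sm.measurable)
    have hms : AEStronglyMeasurable (fun x => f x (Θ x)) (volume.restrict Ω) :=
      hm.aestronglyMeasurable.congr (hΘ'eq.mono fun x hx => by
        show f x (Θ' x) = f x (Θ x); rw [hx])
    refine Integrable.mono' ((hΘpI.const_mul c1).add ha') hms ?_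
    filter_upwards [hbd] with x hbx
    have h := hbx (Θ x)
    have h1 : 0 ≤ c0 * ‖Θ x‖ ^ p := by positivity
    have h2 : 0 ≤ c1 * ‖Θ x‖ ^ p := by positivity
    have h3 := ha0 x; have h4 := ha1 x
    obtain ⟨hl, hu⟩ := h
    rw [Real.norm_eq_abs, abs_le, Pi.add_apply]
    constructor <;> linarith
  have hintΦ := hcomp Φ hΦ hΦpI
  have hintΨ := hcomp Ψ hΨ hΨpI
  -- pointwise bound
  have hptw : ∀ᵐ x ∂(volume.restrict Ω),
      |f x (Φ x) - f x (Ψ x)| ≤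
        (c1 * 2 ^ p + 1) * (‖Φ x - Ψ x‖ * R x ^ (p - 1)) := by
    filter_upwards [hcv, hbd] with x hcx hbx
    have hlow : ∀ ξ : Vec m, -(a0 x) ≤ f x ξ := by
      intro ξ
      have h := (hbx ξ).1
      have : 0 ≤ c0 * ‖ξ‖ ^ p := by positivity
      linarith
    have hup : ∀ ξ : Vec m, f x ξ ≤ c1 * ‖ξ‖ ^ p + a1 x := fun ξ => (hbx ξ).2
    have h1 := conv_diff_le hp hc1 (ha0 x) (ha1 x) hcx hlow hup (Φ x) (Ψ x)
    have h2 := conv_diff_le hp hc1 (ha0 x) (ha1 x) hcx hlow hup (Ψ x) (Φ x)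
    rw [norm_sub_rev (Ψ x) (Φ x), add_comm ‖Ψ x‖ ‖Φ x‖] at h2
    have hRx : (‖Φ x‖ + ‖Ψ x‖ + (a0 x + a1 x) ^ (1/p)) = R x := by rw [hRdef]
    rw [hRx] at h1 h2
    rw [abs_sub_le_iff]
    constructor
    · calc f x (Φ x) - f x (Ψ x)
          ≤ (c1 * 2 ^ p + 1) * R x ^ (p-1) * ‖Φ x - Ψ x‖ := h1
        _ = (c1 * 2 ^ p + 1) * (‖Φ x - Ψ x‖ * R x ^ (p - 1)) := by ring
    · calc f x (Ψ x) - f x (Φ x)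
          ≤ (c1 * 2 ^ p + 1) * R x ^ (p-1) * ‖Φ x - Ψ x‖ := h2
        _ = (c1 * 2 ^ p + 1) * (‖Φ x - Ψ x‖ * R x ^ (p - 1)) := by ring
  -- integrability of the product
  have hprod : Integrable (fun x => ‖Φ x - Ψ x‖ * R x ^ (p - 1)) (volume.restrict Ω) := by
    have h111 : (1:ℝ≥0∞) / 1 = 1 / ENNReal.ofReal q + 1 / ENNReal.ofReal p := by
      simp only [one_div]
      rw [inv_one, add_comm, ← hpq.inv_add_inv_ennreal]
    have hsm := hΔ.norm.smul (r := 1) hRq (hpqr := ⟨by simpa [one_div] using h111.symm⟩)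
    have : Integrable ((fun x => R x ^ (p - 1)) • fun x => ‖Φ x - Ψ x‖) (volume.restrict Ω) :=
      memLp_one_iff_integrable.mp hsm
    exact this.congr (Eventually.of_forall fun x => by
      simp [Pi.smul_apply, smul_eq_mul, mul_comm])
  -- Hölder
  have hhold := integral_mul_le_Lp_mul_Lq_of_nonneg hpq
    (Eventually.of_forall fun x => norm_nonneg (Φ x - Ψ x))
    (Eventually.of_forall fun x => Real.rpow_nonneg (hR0 x) (p - 1))
    hΔ.norm hRq
  have hq_rw : (∫ x in Ω, (R x ^ (p - 1)) ^ q) = ∫ x in Ω, R x ^ p := by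
    apply integral_congr_ae
    apply Eventually.of_forall
    intro x
    show (R x ^ (p - 1)) ^ q = R x ^ p
    rw [← Real.rpow_mul (hR0 x), hpq.sub_one_mul_conj]
  rw [hq_rw] at hhold
  -- bound on ∫ R^p
  set X : ℝ := ∫ x in Ω, ‖Φ x‖ ^ p with hXdef
  set Y : ℝ := ∫ x in Ω, ‖Ψ x‖ ^ p with hYdef
  have hX0 : 0 ≤ X := integral_nonneg fun x => by positivity
  have hY0 : 0 ≤ Y := integral_nonneg fun x => by positivity
  set S : ℝ := X ^ (1/p) + Y ^ (1/p) + 1 with hSdef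
  have hS1 : 1 ≤ S := by
    have h1 : 0 ≤ X ^ (1/p) := by positivity
    have h2 : 0 ≤ Y ^ (1/p) := by positivity
    simp only [hSdef]; linarith
  have hS0 : 0 ≤ S := by linarith
  have hRpX : (∫ x in Ω, R x ^ p) ≤ 3 ^ p * (X + Y + A) := by
    have hmono : (∫ x in Ω, R x ^ p) ≤
        ∫ x in Ω, 3 ^ p * (‖Φ x‖ ^ p + ‖Ψ x‖ ^ p + (a0 x + a1 x)) := by
      refine integral_mono_ae hRpI ?_ ?_
      · exact ((hΦpI.add hΨpI).add ha').const_mul _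
      · refine Eventually.of_forall fun x => ?_
        have haa : (0:ℝ) ≤ a0 x + a1 x := by have := ha0 x; have := ha1 x; linarith
        calc R x ^ p = (‖Φ x‖ + ‖Ψ x‖ + (a0 x + a1 x) ^ (1/p)) ^ p := by rw [hRdef]
          _ ≤ 3 ^ p * (‖Φ x‖ ^ p + ‖Ψ x‖ ^ p + ((a0 x + a1 x) ^ (1/p)) ^ p) :=
              tri_rpow hp0.le (norm_nonneg _) (norm_nonneg _) (Real.rpow_nonneg haa _)
          _ = 3 ^ p * (‖Φ x‖ ^ p + ‖Ψ x‖ ^ p + (a0 x + a1 x)) := by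
              rw [← Real.rpow_mul haa, one_div, inv_mul_cancel₀ hp0.ne', Real.rpow_one]
    have heq : (∫ x in Ω, 3 ^ p * (‖Φ x‖ ^ p + ‖Ψ x‖ ^ p + (a0 x + a1 x)))
        = 3 ^ p * (X + Y + ∫ x in Ω, (a0 x + a1 x)) := by
      have hsum2 : Integrable (fun x => ‖Φ x‖ ^ p + ‖Ψ x‖ ^ p) (volume.restrict Ω) :=
        hΦpI.add hΨpI
      rw [integral_const_mul, integral_add hsum2 ha', integral_add hΦpI hΨpI]
    have hfin : 3 ^ p * (X + Y + ∫ x in Ω, (a0 x + a1 x)) ≤ 3 ^ p * (X + Y + A) := by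
      apply mul_le_mul_of_nonneg_left (by linarith [hAle]) (by positivity)
    linarith [hmono, heq ▸ hmono]
  have hXS : X ≤ S ^ p := by
    have h : X ^ (1/p) ≤ S := by
      have : 0 ≤ Y ^ (1/p) := by positivity
      simp only [hSdef]; linarith
    have h2 := Real.rpow_le_rpow (Real.rpow_nonneg hX0 _) h hp0.le
    rwa [← Real.rpow_mul hX0, one_div, inv_mul_cancel₀ hp0.ne', Real.rpow_one] at h2
  have hYS : Y ≤ S ^ p := by
    have h : Y ^ (1/p) ≤ S := by
      have : 0 ≤ X ^ (1/p) := by positivity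
      simp only [hSdef]; linarith
    have h2 := Real.rpow_le_rpow (Real.rpow_nonneg hY0 _) h hp0.le
    rwa [← Real.rpow_mul hY0, one_div, inv_mul_cancel₀ hp0.ne', Real.rpow_one] at h2
  have hSp1 : 1 ≤ S ^ p := Real.one_le_rpow hS1 hp0.le
  have hRfinal : (∫ x in Ω, R x ^ p) ^ (1/q) ≤ 3 ^ p * (2 + A) * S ^ (p - 1) := by
    have h0 : 0 ≤ ∫ x in Ω, R x ^ p :=
      integral_nonneg fun x => Real.rpow_nonneg (hR0 x) _
    have h1 : (∫ x in Ω, R x ^ p) ≤ (3 ^ p * (2 + A)) * S ^ p := by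
      have hsum : X + Y + A ≤ (2 + A) * S ^ p := by nlinarith [hXS, hYS, hSp1]
      have h3p : (0:ℝ) ≤ 3 ^ p := by positivity
      calc (∫ x in Ω, R x ^ p) ≤ 3 ^ p * (X + Y + A) := hRpX
        _ ≤ 3 ^ p * ((2 + A) * S ^ p) := mul_le_mul_of_nonneg_left hsum h3p
        _ = (3 ^ p * (2 + A)) * S ^ p := by ring
    have h2 := Real.rpow_le_rpow h0 h1 (by positivity : (0:ℝ) ≤ 1/q)
    have h3 : ((3 ^ p * (2 + A)) * S ^ p) ^ (1/q)
        = (3 ^ p * (2 + A)) ^ (1/q) * (S ^ p) ^ (1/q) :=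
      Real.mul_rpow (by positivity) (by positivity)
    have h4 : (S ^ p) ^ (1/q) = S ^ (p - 1) := by
      rw [← Real.rpow_mul hS0, mul_one_div, hpq.div_conj_eq_sub_one]
    have h5 : (3 ^ p * (2 + A)) ^ (1/q) ≤ 3 ^ p * (2 + A) := by
      have hb1 : (1:ℝ) ≤ 3 ^ p * (2 + A) := by
        have h31 : (1:ℝ) ≤ 3 ^ p := Real.one_le_rpow (by norm_num) hp0.le
        nlinarith
      calc (3 ^ p * (2 + A)) ^ (1/q) ≤ (3 ^ p * (2 + A)) ^ (1:ℝ) := by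
            apply Real.rpow_le_rpow_of_exponent_le hb1
            rw [div_le_one hq0]; linarith
        _ = 3 ^ p * (2 + A) := Real.rpow_one _
    have hSp1' : (0:ℝ) ≤ S ^ (p - 1) := by positivity
    calc (∫ x in Ω, R x ^ p) ^ (1/q) ≤ ((3 ^ p * (2 + A)) * S ^ p) ^ (1/q) := h2
      _ = (3 ^ p * (2 + A)) ^ (1/q) * S ^ (p - 1) := by rw [h3, h4]
      _ ≤ 3 ^ p * (2 + A) * S ^ (p - 1) := mul_le_mul_of_nonneg_right h5 hSp1'
  -- final assembly
  set D : ℝ := (∫ x in Ω, ‖Φ x - Ψ x‖ ^ p) ^ (1/p) with hDdef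
  have hD0 : 0 ≤ D :=
    Real.rpow_nonneg (integral_nonneg fun x => Real.rpow_nonneg (norm_nonneg _) _) _
  have hK0 : (0:ℝ) ≤ c1 * 2 ^ p + 1 := by positivity
  calc (∫ x in Ω, |f x (Φ x) - f x (Ψ x)|)
      ≤ ∫ x in Ω, (c1 * 2 ^ p + 1) * (‖Φ x - Ψ x‖ * R x ^ (p - 1)) :=
        integral_mono_ae (hintΦ.sub hintΨ).abs (hprod.const_mul _) hptw
    _ = (c1 * 2 ^ p + 1) * ∫ x in Ω, ‖Φ x - Ψ x‖ * R x ^ (p - 1) := integral_const_mul _ _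
    _ ≤ (c1 * 2 ^ p + 1) * (D * (∫ x in Ω, R x ^ p) ^ (1/q)) :=
        mul_le_mul_of_nonneg_left hhold hK0
    _ ≤ (c1 * 2 ^ p + 1) * (D * (3 ^ p * (2 + A) * S ^ (p - 1))) := by
        apply mul_le_mul_of_nonneg_left (mul_le_mul_of_nonneg_left hRfinal hD0) hK0
    _ = (c1 * 2 ^ p + 1) * (3 ^ p * (2 + A)) * D * S ^ (p - 1) := by ring

end
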